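/- arXiv:2310.14115 — 3 statements merged into one kernel-verified Lean document; each statement's English description precedes it below -/
import Mathlib

section
/- For all complex numbers a₀, a₁ with a₀ ≠ 0 and a₁ ≠ 0, the quaternion σ₀(a₀, a₁)·σ₁(a₀, a₁)⁻¹ equals the unit complex number (a₁/a₀)/|a₁/a₀| (regarded as a quaternion); in particular it lies in the unit circle of ℂ ⊂ ℍ. -/
open Quaternion

noncomputable section

/-- The embedding of `ℂ` into the quaternions `ℍ` as the real span of `1` and `i`. -/
def cq (z : ℂ) : ℍ[ℝ] := ⟨z.re, z.im, 0, 0⟩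

/-- The imaginary unit `j` of the quaternions. -/
def jq : ℍ[ℝ] := ⟨0, 0, 1, 0⟩

/-- `σ₀(a₀,a₁) = (1 + (a₁/a₀)·j)/‖1 + (a₁/a₀)·j‖`, defined for `a₀ ≠ 0`. -/
def sigma0 (a₀ a₁ : ℂ) : ℍ[ℝ] := ‖cq 1 + cq (a₁ / a₀) * jq‖⁻¹ • (cq 1 + cq (a₁ / a₀) * jq)

/-- `σ₁(a₀,a₁) = (a₀/a₁ + j)/‖a₀/a₁ + j‖`, defined for `a₁ ≠ 0`. -/
def sigma1 (a₀ a₁ : ℂ) : ℍ[ℝ] := ‖cq (a₀ / a₁) + jq‖⁻¹ • (cq (a₀ / a₁) + jq)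

/-! Writing `r = a₁/a₀`, the numerator of `σ₀` factors as `1 + r j = r (r⁻¹ + j)`, and `r⁻¹ + j`
is the numerator of `σ₁`. As the quaternion norm is multiplicative, normalizing commutes with
this product, so `σ₀ = (r/|r|) σ₁`. -/

theorem inv_norm_smul_mul {A : Type*} [NormedRing A] [NormMulClass A] [NormedAlgebra ℝ A]
    (x y : A) : ‖x * y‖⁻¹ • (x * y) = (‖x‖⁻¹ • x) * (‖y‖⁻¹ • y) := by
  rw [smul_mul_smul_comm, norm_mul, mul_inv]

theorem cq_eq_coeComplex (z : ℂ) : cq z = (z : ℍ) := rfl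

theorem norm_coeComplex (z : ℂ) : ‖(z : ℍ)‖ = ‖z‖ := by
  rw [← sq_eq_sq₀ (norm_nonneg _) (norm_nonneg _), ← Complex.normSq_eq_norm_sq, sq,
    ← normSq_eq_norm_mul_self, normSq_def', Complex.normSq_apply]
  simp [sq]

theorem cq_div_norm (z : ℂ) : cq (z / (‖z‖ : ℂ)) = ‖cq z‖⁻¹ • cq z := by
  rw [div_eq_inv_mul, ← Complex.ofReal_inv, ← Complex.real_smul, cq_eq_coeComplex,
    cq_eq_coeComplex, norm_coeComplex]
  exact map_smul ofComplex _ _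

theorem cq_add_jq_ne_zero (z : ℂ) : cq z + jq ≠ 0 := fun h => by
  have h' : (0 : ℝ) + 1 = 0 := congrArg QuaternionAlgebra.imJ h
  norm_num at h'

theorem sigma1_ne_zero (a₀ a₁ : ℂ) : sigma1 a₀ a₁ ≠ 0 :=
  smul_ne_zero (inv_ne_zero (norm_ne_zero_iff.mpr (cq_add_jq_ne_zero _)))
    (cq_add_jq_ne_zero _)

theorem sigma0_eq_mul_sigma1 {a₀ a₁ : ℂ} (h₀ : a₀ ≠ 0) (h₁ : a₁ ≠ 0) :
    sigma0 a₀ a₁ = cq ((a₁ / a₀) / (‖a₁ / a₀‖ : ℂ)) * sigma1 a₀ a₁ := by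
  have hr : a₁ / a₀ ≠ 0 := div_ne_zero h₁ h₀
  have factor : cq 1 + cq (a₁ / a₀) * jq = cq (a₁ / a₀) * (cq (a₀ / a₁) + jq) := by
    simp only [cq_eq_coeComplex, mul_add, ← coeComplex_mul, ← inv_div a₁ a₀,
      mul_inv_cancel₀ hr]
  rw [sigma0, sigma1, factor, inv_norm_smul_mul, cq_div_norm]

/-- `σ₀(a₀,a₁)·σ₁(a₀,a₁)⁻¹` equals the unit complex number `(a₁/a₀)/|a₁/a₀|` regarded as a
quaternion; in particular it lies in the unit circle of `ℂ ⊂ ℍ`. -/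
theorem sigma0_mul_sigma1_inv (a₀ a₁ : ℂ) (h₀ : a₀ ≠ 0) (h₁ : a₁ ≠ 0) :
    sigma0 a₀ a₁ * (sigma1 a₀ a₁)⁻¹ = cq ((a₁ / a₀) / (‖a₁ / a₀‖ : ℂ)) ∧
    (sigma0 a₀ a₁ * (sigma1 a₀ a₁)⁻¹).imJ = 0 ∧
    (sigma0 a₀ a₁ * (sigma1 a₀ a₁)⁻¹).imK = 0 ∧
    ‖sigma0 a₀ a₁ * (sigma1 a₀ a₁)⁻¹‖ = 1 := by
  have key : sigma0 a₀ a₁ * (sigma1 a₀ a₁)⁻¹ = cq ((a₁ / a₀) / (‖a₁ / a₀‖ : ℂ)) := by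
    rw [sigma0_eq_mul_sigma1 h₀ h₁, mul_inv_cancel_right₀ (sigma1_ne_zero a₀ a₁)]
  refine ⟨key, by rw [key]; rfl, by rw [key]; rfl, ?_⟩
  rw [key, cq_eq_coeComplex, norm_coeComplex, norm_div, Complex.norm_real, norm_norm,
    div_self (norm_ne_zero_iff.mpr (div_ne_zero h₁ h₀))]
end
end

section
/- Let h be a quaternion of norm 1 and let (a₀, a₁), (b₀, b₁) ∈ ℂ² ∖ {(0,0)}. Then the complex components of (b₀ + b₁·j)·h represent the point [a₀:a₁] of ℂP¹ if and only if there exists θ ∈ ℝ such that h = ((b₀ + b₁·j)⁻¹/‖(b₀ + b₁·j)⁻¹‖)·(cos θ + (sin θ)·i)·((a₀ + a₁·j)/‖a₀ + a₁·j‖). In other words, the fibre of the parametrised Hopf map Φ over ([a₀:a₁], [b₀:b₁]) consists exactly of the unit quaternions of this form. -/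
open Quaternion

noncomputable section

/-- The complex components of a quaternion: `q = c₀ + c₁·j` with
`c₀ = re q + (im_i q)·i` and `c₁ = im_j q + (im_k q)·i`. -/
def comps (q : ℍ[ℝ]) : ℂ × ℂ := (⟨q.re, q.imI⟩, ⟨q.imJ, q.imK⟩)

/-- The complex projective line `ℂP¹`, as the projectivization of `ℂ²`. -/
abbrev CP1 := Projectivization ℂ (ℂ × ℂ)

/-- The quotient topology on `ℂP¹`. -/
instance : TopologicalSpace CP1 := instTopologicalSpaceQuotient

/-! `comps` is a bijection `ℍ ≃ ℂ²` which turns left multiplication by `cq u` into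
scalar multiplication by `u`, and which sends `A = a₀ + a₁·j` to `(a₀, a₁)`. So the components
of `B·h` represent `[a₀:a₁]` iff `B·h = u·A` for some `u ∈ ℂ`, i.e. `h = B⁻¹·u·A`. Taking
norms, `‖h‖ = 1` forces `|u| = (‖B⁻¹‖‖A‖)⁻¹`, and the polar form `u = |u|(cos θ + i sin θ)`
gives the fibre. -/

lemma comps_injective : Function.Injective comps := by
  intro p q h
  simp only [comps, Prod.ext_iff, Complex.ext_iff] at h
  ext <;> tauto

lemma comps_cq_add_cq_mul_jq (z₀ z₁ : ℂ) : comps (cq z₀ + cq z₁ * jq) = (z₀, z₁) := by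
  simp only [comps, re_add, imI_add, imJ_add, imK_add, re_mul, imI_mul, imJ_mul, imK_mul]
  simp [cq, jq]

lemma comps_cq_mul (u : ℂ) (q : ℍ[ℝ]) : comps (cq u * q) = u • comps q := by
  simp only [comps, re_mul, imI_mul, imJ_mul, imK_mul]
  simp [cq, Complex.ext_iff]

lemma cq_smul (r : ℝ) (z : ℂ) : cq (r • z) = r • cq z := by
  ext <;> simp only [re_smul, imI_smul, imJ_smul, imK_smul] <;> simp [cq]

lemma norm_cq (z : ℂ) : ‖cq z‖ = ‖z‖ := by
  rw [norm_eq_sqrt_real_inner, Quaternion.inner_self, Quaternion.normSq_def', Complex.norm_def,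
    Complex.normSq_apply]
  simp [cq, sq]

lemma Complex.exists_eq_norm_smul_cos_add_sin (u : ℂ) :
    ∃ θ : ℝ, u = ‖u‖ • (⟨Real.cos θ, Real.sin θ⟩ : ℂ) :=
  ⟨u.arg, Complex.ext (by simp [Complex.norm_mul_cos_arg])
    (by simp [Complex.norm_mul_sin_arg])⟩

lemma smul_mul_cq_mul_smul (A B : ℍ[ℝ]) (z : ℂ) :
    (‖B⁻¹‖⁻¹ • B⁻¹) * cq z * (‖A‖⁻¹ • A) = B⁻¹ * cq ((‖B⁻¹‖ * ‖A‖)⁻¹ • z) * A := by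
  simp only [cq_smul, mul_inv, smul_mul_assoc, mul_smul_comm, smul_smul, mul_comm]

lemma exists_cq_mul_eq_mul_iff {A B h : ℍ[ℝ]} (hB : B ≠ 0) (hh : ‖h‖ = 1) :
    (∃ u : ℂ, cq u * A = B * h) ↔
      ∃ θ : ℝ, h = (‖B⁻¹‖⁻¹ • B⁻¹) * cq ⟨Real.cos θ, Real.sin θ⟩ * (‖A‖⁻¹ • A) := by
  simp_rw [smul_mul_cq_mul_smul, mul_assoc, eq_comm (a := cq _ * A),
    ← eq_inv_mul_iff_mul_eq₀ hB]
  constructor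
  · rintro ⟨u, rfl⟩
    have hu : ‖u‖ = (‖B⁻¹‖ * ‖A‖)⁻¹ := by
      rw [norm_mul, norm_mul, norm_cq] at hh
      exact eq_inv_of_mul_eq_one_left (by linear_combination hh)
    obtain ⟨θ, hθ⟩ := u.exists_eq_norm_smul_cos_add_sin
    exact ⟨θ, by rw [← hu, ← hθ]⟩
  · rintro ⟨θ, rfl⟩
    exact ⟨_, rfl⟩

theorem parametrised_hopf_fibre_general (h : ℍ[ℝ]) (hh : ‖h‖ = 1) (a₀ a₁ b₀ b₁ : ℂ)
    (ha : ((a₀, a₁) : ℂ × ℂ) ≠ 0)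
    (hc : comps ((cq b₀ + cq b₁ * jq) * h) ≠ 0) :
    Projectivization.mk ℂ _ hc = Projectivization.mk ℂ (a₀, a₁) ha ↔
      ∃ θ : ℝ,
        h = (‖(cq b₀ + cq b₁ * jq)⁻¹‖⁻¹ • (cq b₀ + cq b₁ * jq)⁻¹) *
          cq ⟨Real.cos θ, Real.sin θ⟩ *
          (‖cq a₀ + cq a₁ * jq‖⁻¹ • (cq a₀ + cq a₁ * jq)) := by
  have hB : cq b₀ + cq b₁ * jq ≠ 0 := by
    intro hB₀
    rw [hB₀, zero_mul] at hc
    exact hc rfl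
  rw [Projectivization.mk_eq_mk_iff', ← exists_cq_mul_eq_mul_iff hB hh]
  simp_rw [← comps_cq_add_cq_mul_jq a₀ a₁, ← comps_cq_mul, comps_injective.eq_iff]

/-- Description of the fibre of the parametrised Hopf map: for a unit quaternion `h`, the
complex components of `(b₀ + b₁·j)·h` represent `[a₀:a₁] ∈ ℂP¹` if and only if
`h = ((b₀ + b₁·j)⁻¹/‖(b₀ + b₁·j)⁻¹‖)·(cos θ + (sin θ)·i)·((a₀ + a₁·j)/‖a₀ + a₁·j‖)`
for some `θ ∈ ℝ`. -/
theorem parametrised_hopf_fibre (h : ℍ[ℝ]) (hh : ‖h‖ = 1) (a₀ a₁ b₀ b₁ : ℂ)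
    (ha : ((a₀, a₁) : ℂ × ℂ) ≠ 0) (hb : ((b₀, b₁) : ℂ × ℂ) ≠ 0)
    (hc : comps ((cq b₀ + cq b₁ * jq) * h) ≠ 0) :
    Projectivization.mk ℂ _ hc = Projectivization.mk ℂ (a₀, a₁) ha ↔
      ∃ θ : ℝ,
        h = (‖(cq b₀ + cq b₁ * jq)⁻¹‖⁻¹ • (cq b₀ + cq b₁ * jq)⁻¹) *
          cq ⟨Real.cos θ, Real.sin θ⟩ *
          (‖cq a₀ + cq a₁ * jq‖⁻¹ • (cq a₀ + cq a₁ * jq)) :=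
  parametrised_hopf_fibre_general h hh a₀ a₁ b₀ b₁ ha hc
end
end

section
/- Let i, j ∈ {0,1}, let h be a quaternion of norm 1, let (b₀, b₁) ∈ ℂ² with b_j ≠ 0, and let (c₀, c₁) be the complex components of (b₀ + b₁·j)·h, assumed to satisfy c_i ≠ 0. Then the quaternion σ_j(b₀, b₁)·h·σ_i(c₀, c₁)⁻¹ is a unit complex number, i.e. its j- and k-components vanish and it has norm 1. -/
open Quaternion

noncomputable section

/-- `σ_j` for `j ∈ {0,1}`. -/
def sigma' (j : Fin 2) (a₀ a₁ : ℂ) : ℍ[ℝ] := if j = 0 then sigma0 a₀ a₁ else sigma1 a₀ a₁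

/-
Up to a positive real factor, `σ_j(a₀,a₁)` is `a_j⁻¹ · (a₀ + a₁·j)`. With `q = b₀ + b₁·j`, the
quaternion `σ_i(c₀,c₁)` is therefore a real multiple of `γ · q h` for `γ = c_i⁻¹ ∈ ℂ`, and
`σ_j(b₀,b₁) · h · σ_i(c₀,c₁)⁻¹` is a real multiple of `β · q h · (q h)⋆ · γ⋆ = |q h|² · β γ̄`
with `β = b_j⁻¹`, hence lies in `ℂ`. It has norm one because `h` and both `σ`'s do.
-/

@[simp] lemma cq_re (z : ℂ) : (cq z).re = z.re := rfl
@[simp] lemma cq_imI (z : ℂ) : (cq z).imI = z.im := rfl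
@[simp] lemma cq_imJ (z : ℂ) : (cq z).imJ = 0 := rfl
@[simp] lemma cq_imK (z : ℂ) : (cq z).imK = 0 := rfl
@[simp] lemma jq_re : jq.re = 0 := rfl
@[simp] lemma jq_imI : jq.imI = 0 := rfl
@[simp] lemma jq_imJ : jq.imJ = 1 := rfl
@[simp] lemma jq_imK : jq.imK = 0 := rfl

lemma cq_one : cq 1 = 1 := by
  ext <;> simp

lemma cq_mul (z w : ℂ) : cq (z * w) = cq z * cq w := by
  ext <;> simp [Complex.mul_re, Complex.mul_im]

lemma star_cq (z : ℂ) : star (cq z) = cq (star z) := by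
  ext <;> simp

lemma cq_comps_fst_add_cq_comps_snd_mul_jq (q : ℍ[ℝ]) :
    cq (comps q).1 + cq (comps q).2 * jq = q := by
  ext <;> simp [comps]

lemma cq_mul_mul_star_cq_mul (β γ : ℂ) (p : ℍ[ℝ]) :
    cq β * p * star (cq γ * p) = normSq p • cq (β * star γ) := by
  rw [star_mul, star_cq, mul_assoc, ← mul_assoc p, self_mul_star, coe_mul_eq_smul,
    mul_smul_comm, ← cq_mul]

lemma norm_sigma' (j : Fin 2) (a₀ a₁ : ℂ) : ‖sigma' j a₀ a₁‖ = 1 := by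
  match j with
  | 0 =>
    refine norm_smul_inv_norm (𝕜 := ℝ) fun h0 => ?_
    simpa using congrArg QuaternionAlgebra.re h0
  | 1 =>
    refine norm_smul_inv_norm (𝕜 := ℝ) fun h0 => ?_
    simpa using congrArg QuaternionAlgebra.imJ h0

lemma exists_sigma'_eq_smul (j : Fin 2) (a₀ a₁ : ℂ) (ha : (if j = 0 then a₀ else a₁) ≠ 0) :
    ∃ r : ℝ, sigma' j a₀ a₁ =
      r • (cq (if j = 0 then a₀ else a₁)⁻¹ * (cq a₀ + cq a₁ * jq)) := by
  match j with
  | 0 =>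
    simp only [sigma', sigma0, Fin.isValue, ↓reduceIte] at ha ⊢
    refine ⟨_, congrArg _ ?_⟩
    rw [mul_add, ← mul_assoc, ← cq_mul, ← cq_mul, inv_mul_cancel₀ ha, inv_mul_eq_div]
  | 1 =>
    simp only [sigma', sigma1, Fin.isValue, one_ne_zero, ↓reduceIte] at ha ⊢
    refine ⟨_, congrArg _ ?_⟩
    rw [mul_add, ← mul_assoc, ← cq_mul, ← cq_mul, inv_mul_cancel₀ ha, inv_mul_eq_div, cq_one,
      one_mul]

/-- The quaternion `σ_j(b₀,b₁)·h·σ_i(c₀,c₁)⁻¹`, where `(c₀,c₁)` are the complex components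
of `(b₀ + b₁·j)·h`, is a unit complex number: its `j`- and `k`-components vanish and it has
norm `1`. -/
theorem trivialising_map_takes_values_in_circle (i j : Fin 2) (h : ℍ[ℝ]) (hh : ‖h‖ = 1)
    (b₀ b₁ : ℂ) (hb : (if j = 0 then b₀ else b₁) ≠ 0)
    (hc : (if i = 0 then (comps ((cq b₀ + cq b₁ * jq) * h)).1
           else (comps ((cq b₀ + cq b₁ * jq) * h)).2) ≠ 0) :
    (sigma' j b₀ b₁ * h * (sigma' i (comps ((cq b₀ + cq b₁ * jq) * h)).1
        (comps ((cq b₀ + cq b₁ * jq) * h)).2)⁻¹).imJ = 0 ∧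
    (sigma' j b₀ b₁ * h * (sigma' i (comps ((cq b₀ + cq b₁ * jq) * h)).1
        (comps ((cq b₀ + cq b₁ * jq) * h)).2)⁻¹).imK = 0 ∧
    ‖sigma' j b₀ b₁ * h * (sigma' i (comps ((cq b₀ + cq b₁ * jq) * h)).1
        (comps ((cq b₀ + cq b₁ * jq) * h)).2)⁻¹‖ = 1 := by
  set c := comps ((cq b₀ + cq b₁ * jq) * h)
  obtain ⟨r, hr⟩ := exists_sigma'_eq_smul j b₀ b₁ hb
  obtain ⟨s, hs⟩ := exists_sigma'_eq_smul i c.1 c.2 hc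
  rw [cq_comps_fst_add_cq_comps_snd_mul_jq] at hs
  have hcomplex : ∃ (t : ℝ) (z : ℂ), sigma' j b₀ b₁ * h * (sigma' i c.1 c.2)⁻¹ = t • cq z := by
    rw [inv_def, hs, hr, Quaternion.star_smul, smul_mul_assoc, smul_mul_assoc, mul_smul_comm,
      mul_smul_comm, mul_assoc (cq _), cq_mul_mul_star_cq_mul, smul_smul, smul_smul, smul_smul]
    exact ⟨_, _, rfl⟩
  obtain ⟨t, z, hz⟩ := hcomplex
  refine ⟨by simp [hz], by simp [hz], ?_⟩
  rw [norm_mul, norm_mul, norm_inv, norm_sigma', norm_sigma', hh]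
  norm_num
end
end
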